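/- arXiv:1212.6117 — 6 statements merged into one kernel-verified Lean document; each statement's English description precedes it below -/
import Mathlib

section
/- Let G be a group and φ: G → ℝ a quasimorphism that is conjugation-invariant (φ(xyx⁻¹) = φ(y)) and antisymmetric (φ(x⁻¹) = −φ(x)). Then for all a, b ∈ G and all k ≥ 1, |φ((ab)^{3^k}) − φ((a³b³)^{3^{k−1}})| ≤ 2·D(φ)·3^{k−1}. -/
/-!
Write `x = a³b³` and `y = (ab)³`. Then `x y⁻¹` is a commutator, and a conjugation-invariant,
antisymmetric quasimorphism is bounded by its defect on commutators. Telescoping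
`xⁿ y⁻ⁿ = ∏ᵢ yⁱ (x y⁻¹) y⁻ⁱ` shows `|φ(xⁿ) - φ(yⁿ)| ≤ n (|φ(x y⁻¹)| + D)`, and `n = 3^(k-1)`
gives the estimate.
-/

section ConjInvariantQuasimorphism

variable {G : Type*} [Group G] {φ : G → ℝ} {D : ℝ}

theorem abs_map_commutator_le (hq : ∀ x y : G, |φ (x * y) - φ x - φ y| ≤ D)
    (hconj : ∀ x y : G, φ (x * y * x⁻¹) = φ y) (hanti : ∀ x : G, φ x⁻¹ = -φ x) (u v : G) :
    |φ (u * v * u⁻¹ * v⁻¹)| ≤ D := by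
  have h_inv : φ (u⁻¹ * v⁻¹) = -φ (u * v) := by
    rw [← mul_inv_rev, hanti, ← hconj v (u * v)]
    group
  simpa [h_inv, mul_assoc] using hq (u * v) (u⁻¹ * v⁻¹)

theorem abs_map_pow_succ_mul_inv_pow_succ_le (hq : ∀ x y : G, |φ (x * y) - φ x - φ y| ≤ D)
    (hconj : ∀ x y : G, φ (x * y * x⁻¹) = φ y) (x y : G) (n : ℕ) :
    |φ (x ^ (n + 1) * (y ^ (n + 1))⁻¹)| ≤ (n + 1) * |φ (x * y⁻¹)| + n * D := by
  induction n with
  | zero => simp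
  | succ n ih =>
    have h_split : x ^ (n + 1 + 1) * (y ^ (n + 1 + 1))⁻¹ =
        x ^ (n + 1) * (y ^ (n + 1))⁻¹ * (y ^ (n + 1) * (x * y⁻¹) * (y ^ (n + 1))⁻¹) := by
      group
    have h_step := hq (x ^ (n + 1) * (y ^ (n + 1))⁻¹) (y ^ (n + 1) * (x * y⁻¹) * (y ^ (n + 1))⁻¹)
    rw [← h_split, hconj] at h_step
    rw [abs_le] at h_step ih ⊢
    push_cast
    constructor <;> linarith [neg_abs_le (φ (x * y⁻¹)), le_abs_self (φ (x * y⁻¹))]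

theorem abs_map_pow_sub_map_pow_le (hq : ∀ x y : G, |φ (x * y) - φ x - φ y| ≤ D)
    (hconj : ∀ x y : G, φ (x * y * x⁻¹) = φ y) (x y : G) (n : ℕ) :
    |φ (x ^ n) - φ (y ^ n)| ≤ n * (|φ (x * y⁻¹)| + D) := by
  cases n with
  | zero => simp
  | succ n =>
    have h_split := hq (x ^ (n + 1) * (y ^ (n + 1))⁻¹) (y ^ (n + 1))
    rw [inv_mul_cancel_right] at h_split
    have h_tele := abs_map_pow_succ_mul_inv_pow_succ_le hq hconj x y n
    rw [abs_le] at h_split h_tele ⊢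
    push_cast
    constructor <;> linarith

end ConjInvariantQuasimorphism

theorem qm_power3_estimate_general {G : Type*} [Group G] (φ : G → ℝ) (D : ℝ)
    (hq : ∀ x y : G, |φ (x * y) - φ x - φ y| ≤ D)
    (hconj : ∀ x y : G, φ (x * y * x⁻¹) = φ y)
    (hanti : ∀ x : G, φ x⁻¹ = -φ x)
    (a b : G) (k : ℕ) (hk : 1 ≤ k) :
    |φ ((a * b) ^ 3 ^ k) - φ ((a ^ 3 * b ^ 3) ^ 3 ^ (k - 1))| ≤ 2 * D * 3 ^ (k - 1) := by
  obtain ⟨m, rfl⟩ := Nat.exists_eq_add_of_le' hk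
  have h_comm : a ^ 3 * b ^ 3 * ((a * b) ^ 3)⁻¹ =
      a ^ 3 * b * a⁻¹ * (a * b * a⁻¹ * a⁻¹) * (a ^ 3 * b * a⁻¹)⁻¹ * (a * b * a⁻¹ * a⁻¹)⁻¹ := by
    simp only [pow_succ, pow_zero, one_mul]
    group
  have h_defect := abs_map_commutator_le hq hconj hanti (a ^ 3 * b * a⁻¹) (a * b * a⁻¹ * a⁻¹)
  have h_pow := abs_map_pow_sub_map_pow_le hq hconj (a ^ 3 * b ^ 3) ((a * b) ^ 3) (3 ^ m)
  rw [h_comm, abs_sub_comm, ← pow_mul, ← pow_succ'] at h_pow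
  push_cast at h_pow
  calc _ ≤ 3 ^ m * (D + D) := h_pow.trans (by gcongr)
    _ = 2 * D * 3 ^ (m + 1 - 1) := by rw [Nat.add_sub_cancel]; ring

theorem qm_power3_estimate {G : Type*} [Group G] (φ : G → ℝ) (D : ℝ) (hD : 0 ≤ D)
    (hq : ∀ x y : G, |φ (x * y) - φ x - φ y| ≤ D)
    (hconj : ∀ x y : G, φ (x * y * x⁻¹) = φ y)
    (hanti : ∀ x : G, φ x⁻¹ = -φ x)
    (a b : G) (k : ℕ) (hk : 1 ≤ k) :
    |φ ((a * b) ^ 3 ^ k) - φ ((a ^ 3 * b ^ 3) ^ 3 ^ (k - 1))| ≤ 2 * D * 3 ^ (k - 1) :=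
  qm_power3_estimate_general φ D hq hconj hanti a b k hk
end

section
/- Let G be a group and φ: G → ℝ a quasimorphism that is conjugation-invariant (φ(xyx⁻¹) = φ(y)) and antisymmetric (φ(x⁻¹) = −φ(x)). Then for all a, b ∈ G and all n ≥ 1, |φ((ab)^{3ⁿ}) − φ(a^{3ⁿ} b^{3ⁿ})| ≤ D(φ)·(3ⁿ − 1). -/
/-!
Write `(ab)^N = c_N · a^N b^N` with `c_N = powDefect N a b`. Then `φ((ab)^N) − φ(a^N b^N)` differs
from `φ(c_N)` by at most `D`, so it suffices to show `|φ(c_{3^n})| ≤ (3^n − 2) D`. The defect `c_3`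
is conjugate to a commutator, on which a conjugation-invariant antisymmetric quasimorphism is
bounded by `D`. With `v = a^N b^N`, the identity `(c v)^3 = c · v c v⁻¹ · v² c v⁻² · v³` writes
`c_{3N}` as three conjugates of `c_N` times `c_3(a^N, b^N)`, whence
`|φ(c_{3N})| ≤ 3 |φ(c_N)| + 4 D`.
-/

def IsQuasimorphism {G : Type*} [Group G] (φ : G → ℝ) (D : ℝ) : Prop :=
  ∀ x y : G, |φ (x * y) - φ x - φ y| ≤ D

def powDefect {G : Type*} [Group G] (N : ℕ) (a b : G) : G :=
  (a * b) ^ N * (a ^ N * b ^ N)⁻¹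

open scoped commutatorElement

section Group

variable {G : Type*} [Group G]

theorem mul_pow_eq_powDefect_mul (N : ℕ) (a b : G) :
    (a * b) ^ N = powDefect N a b * (a ^ N * b ^ N) := by
  rw [powDefect, inv_mul_cancel_right]

theorem powDefect_three_eq_conj_commutatorElement (a b : G) :
    powDefect 3 a b = (a * b * a * b) * ⁅a * b⁻¹, b⁻¹ * a⁻¹ * a⁻¹⁆ * (a * b * a * b)⁻¹ := by
  simp only [powDefect, commutatorElement_def, pow_succ, pow_zero, one_mul, mul_inv_rev]
  group

theorem powDefect_mul_three (N : ℕ) (a b : G) :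
    powDefect (N * 3) a b =
      powDefect N a b * ((a ^ N * b ^ N) * powDefect N a b * (a ^ N * b ^ N)⁻¹) *
        ((a ^ N * b ^ N) ^ 2 * powDefect N a b * ((a ^ N * b ^ N) ^ 2)⁻¹) *
        powDefect 3 (a ^ N) (b ^ N) := by
  simp only [powDefect, pow_mul]
  generalize (a * b) ^ N = u, a ^ N = x, b ^ N = y
  simp only [pow_succ, pow_zero, one_mul, mul_inv_rev]
  group

end Group

namespace IsQuasimorphism

variable {G : Type*} [Group G] {φ : G → ℝ} {D : ℝ}

theorem abs_map_list_prod_sub_sum_le (hq : IsQuasimorphism φ D) (x : G) (l : List G) :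
    |φ (x :: l).prod - ((x :: l).map φ).sum| ≤ l.length * D := by
  induction l generalizing x with
  | nil => simp
  | cons y l ih =>
    have hxy := hq x (y :: l).prod
    have hyl := ih y
    simp only [List.prod_cons, List.map_cons, List.sum_cons, List.length_cons] at hxy hyl ⊢
    push_cast
    calc |φ (x * (y * l.prod)) - (φ x + (φ y + (l.map φ).sum))|
        = |(φ (x * (y * l.prod)) - φ x - φ (y * l.prod)) +
            (φ (y * l.prod) - (φ y + (l.map φ).sum))| := by ring_nf
      _ ≤ D + l.length * D := (abs_add_le _ _).trans (add_le_add hxy hyl)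
      _ = (l.length + 1) * D := by ring

theorem abs_map_commutatorElement_le (hq : IsQuasimorphism φ D)
    (hconj : ∀ x y : G, φ (x * y * x⁻¹) = φ y) (hanti : ∀ x : G, φ x⁻¹ = -φ x) (g h : G) :
    |φ ⁅g, h⁆| ≤ D := by
  have := hq g (h * g⁻¹ * h⁻¹)
  rwa [hconj, hanti, ← mul_assoc, ← mul_assoc, ← commutatorElement_def, sub_neg_eq_add,
    sub_add_cancel] at this

theorem abs_map_powDefect_three_le (hq : IsQuasimorphism φ D)
    (hconj : ∀ x y : G, φ (x * y * x⁻¹) = φ y) (hanti : ∀ x : G, φ x⁻¹ = -φ x) (a b : G) :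
    |φ (powDefect 3 a b)| ≤ D := by
  rw [powDefect_three_eq_conj_commutatorElement, hconj]
  exact hq.abs_map_commutatorElement_le hconj hanti _ _

theorem abs_map_powDefect_mul_three_le (hq : IsQuasimorphism φ D)
    (hconj : ∀ x y : G, φ (x * y * x⁻¹) = φ y) (hanti : ∀ x : G, φ x⁻¹ = -φ x) (N : ℕ)
    (a b : G) :
    |φ (powDefect (N * 3) a b)| ≤ 3 * |φ (powDefect N a b)| + 4 * D := by
  rw [powDefect_mul_three]
  set c := powDefect N a b
  set v := a ^ N * b ^ N
  have hprod := hq.abs_map_list_prod_sub_sum_le c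
    [v * c * v⁻¹, v ^ 2 * c * (v ^ 2)⁻¹, powDefect 3 (a ^ N) (b ^ N)]
  simp only [List.prod_cons, List.prod_nil, List.map_cons, List.map_nil, List.sum_cons,
    List.sum_nil, List.length_cons, List.length_nil, hconj, mul_one, add_zero] at hprod
  simp only [mul_assoc] at hprod ⊢
  norm_num at hprod
  have hc3 := hq.abs_map_powDefect_three_le hconj hanti (a ^ N) (b ^ N)
  rw [abs_le] at hprod hc3 ⊢
  constructor <;> linarith [le_abs_self (φ c), neg_abs_le (φ c)]

theorem abs_map_powDefect_pow_three_le (hq : IsQuasimorphism φ D)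
    (hconj : ∀ x y : G, φ (x * y * x⁻¹) = φ y) (hanti : ∀ x : G, φ x⁻¹ = -φ x) (a b : G)
    {n : ℕ} (hn : 1 ≤ n) :
    |φ (powDefect (3 ^ n) a b)| ≤ (3 ^ n - 2) * D := by
  induction n, hn using Nat.le_induction with
  | base =>
    simpa [show (3 : ℝ) - 2 = 1 by norm_num] using hq.abs_map_powDefect_three_le hconj hanti a b
  | succ n _ ih =>
    rw [pow_succ]
    calc |φ (powDefect (3 ^ n * 3) a b)|
        ≤ 3 * |φ (powDefect (3 ^ n) a b)| + 4 * D :=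
          hq.abs_map_powDefect_mul_three_le hconj hanti _ a b
      _ ≤ 3 * ((3 ^ n - 2) * D) + 4 * D := by gcongr
      _ = (3 ^ n * 3 - 2) * D := by ring

theorem abs_map_mul_pow_sub_map_pow_mul_pow_le (hq : IsQuasimorphism φ D) (N : ℕ) (a b : G) :
    |φ ((a * b) ^ N) - φ (a ^ N * b ^ N)| ≤ |φ (powDefect N a b)| + D := by
  rw [mul_pow_eq_powDefect_mul]
  calc |φ (powDefect N a b * (a ^ N * b ^ N)) - φ (a ^ N * b ^ N)|
      = |φ (powDefect N a b) +
          (φ (powDefect N a b * (a ^ N * b ^ N)) - φ (powDefect N a b) - φ (a ^ N * b ^ N))| := by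
        ring_nf
    _ ≤ |φ (powDefect N a b)| + D := (abs_add_le _ _).trans (add_le_add le_rfl (hq _ _))

end IsQuasimorphism

theorem qm_power3_estimate_iterated_general {G : Type*} [Group G] (φ : G → ℝ) (D : ℝ)
    (hq : ∀ x y : G, |φ (x * y) - φ x - φ y| ≤ D)
    (hconj : ∀ x y : G, φ (x * y * x⁻¹) = φ y)
    (hanti : ∀ x : G, φ x⁻¹ = -φ x)
    (a b : G) (n : ℕ) (hn : 1 ≤ n) :
    |φ ((a * b) ^ 3 ^ n) - φ (a ^ 3 ^ n * b ^ 3 ^ n)| ≤ D * (3 ^ n - 1) := by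
  have hφ : IsQuasimorphism φ D := hq
  calc |φ ((a * b) ^ 3 ^ n) - φ (a ^ 3 ^ n * b ^ 3 ^ n)|
      ≤ |φ (powDefect (3 ^ n) a b)| + D := hφ.abs_map_mul_pow_sub_map_pow_mul_pow_le _ a b
    _ ≤ (3 ^ n - 2) * D + D := by
        gcongr
        exact hφ.abs_map_powDefect_pow_three_le hconj hanti a b hn
    _ = D * (3 ^ n - 1) := by ring

theorem qm_power3_estimate_iterated {G : Type*} [Group G] (φ : G → ℝ) (D : ℝ) (hD : 0 ≤ D)
    (hq : ∀ x y : G, |φ (x * y) - φ x - φ y| ≤ D)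
    (hconj : ∀ x y : G, φ (x * y * x⁻¹) = φ y)
    (hanti : ∀ x : G, φ x⁻¹ = -φ x)
    (a b : G) (n : ℕ) (hn : 1 ≤ n) :
    |φ ((a * b) ^ 3 ^ n) - φ (a ^ 3 ^ n * b ^ 3 ^ n)| ≤ D * (3 ^ n - 1) :=
  qm_power3_estimate_iterated_general φ D hq hconj hanti a b n hn
end

section
/- Let r, m, j be positive integers with 2 ≤ r ≤ m and 1 ≤ j ≤ m−1. Then (1/(rm)) · Σ_{i=1}^{r−1} (rm − 2|mi − rj|) = (2/r)·{ (rj/m − ⌊rj/m⌋ − 1/2)² + r²·j·(m−j)/m² − 1/4 }. -/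
/-!
Put x = rj/m, so that |mi - rj| = m |i - x| and r²j(m - j)/m² = x (r - x). Splitting the sum of
|i - x| at ⌊x⌋ turns it into two arithmetic progressions, and the floor survives only through the
fractional part f = x - ⌊x⌋, as f (1 - f) = 1/4 - (f - 1/2)².
-/

open Finset

theorem sum_range_natCast_mul_two {R : Type*} [CommRing R] (n : ℕ) :
    (∑ i ∈ range n, (i : R)) * 2 = n * (n - 1) := by
  induction n with
  | zero => simp
  | succ n ih => rw [sum_range_succ, add_mul, ih]; push_cast; ring

theorem sum_range_abs_natCast_sub {K : Type*} [Field K] [LinearOrder K] [IsStrictOrderedRing K]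
    [FloorRing K] {n : ℕ} {x : K} (hx0 : 0 ≤ x) (hxn : x < n) :
    ∑ i ∈ range n, |(i : K) - x| =
      x ^ 2 - (n - 1) * x + n * (n - 1) / 2 + Int.fract x * (1 - Int.fract x) := by
  set q := ⌊x⌋₊
  have hqn : q + 1 ≤ n := (Nat.floor_lt hx0).mpr hxn
  have hfract : Int.fract x = x - q := by
    rw [Int.fract, ← Int.natCast_floor_eq_floor hx0, Int.cast_natCast]
  have hle : ∀ i ∈ range (q + 1), |(i : K) - x| = x - i := fun i hi => by
    have : (i : K) ≤ q := by exact_mod_cast Nat.lt_succ_iff.mp (mem_range.mp hi)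
    rw [abs_sub_comm]
    exact abs_of_nonneg (by linarith [Nat.floor_le hx0])
  have hgt : ∀ i ∈ Ico (q + 1) n, |(i : K) - x| = i - x := fun i hi => by
    have : (q : K) + 1 ≤ i := by exact_mod_cast (mem_Ico.mp hi).1
    exact abs_of_nonneg (by linarith [Nat.lt_floor_add_one x])
  rw [← sum_range_add_sum_Ico _ hqn, sum_congr rfl hle, sum_congr rfl hgt, sum_sub_distrib,
    sum_sub_distrib, sum_Ico_eq_sub _ hqn, sum_const, sum_const, card_range, Nat.card_Ico,
    hfract, nsmul_eq_mul, nsmul_eq_mul, Nat.cast_sub hqn]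
  linear_combination (norm := (push_cast; ring))
    sum_range_natCast_mul_two (R := K) n / 2 - sum_range_natCast_mul_two (R := K) (q + 1)

theorem arithmetic_identity_general (r m j : ℕ) (hr : 2 ≤ r) (hj1 : 1 ≤ j)
    (hjm : j ≤ m - 1) :
    (1 / ((r : ℝ) * m)) *
        ∑ i ∈ Finset.Icc 1 (r - 1), ((r : ℝ) * m - 2 * |(m : ℝ) * i - r * j|) =
      (2 / (r : ℝ)) *
        (((r : ℝ) * j / m - ⌊(r : ℝ) * j / m⌋ - 1 / 2) ^ 2 +
          (r : ℝ) ^ 2 * j * (m - j) / m ^ 2 - 1 / 4) := by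
  have hm : (0 : ℝ) < m := by exact_mod_cast (by omega : 0 < m)
  have hr0 : (0 : ℝ) < r := by exact_mod_cast (by omega : 0 < r)
  set x := (r : ℝ) * j / m with hx
  have hx0 : 0 ≤ x := by positivity
  have hxr : x < r := by
    rw [div_lt_iff₀ hm]
    exact mul_lt_mul_of_pos_left (by exact_mod_cast (by omega : j < m)) hr0
  have hIcc : ∑ i ∈ Icc 1 (r - 1), |(i : ℝ) - x| =
      x ^ 2 - r * x + r * (r - 1) / 2 + Int.fract x * (1 - Int.fract x) := by
    have hrange := sum_range_abs_natCast_sub hx0 hxr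
    rw [sum_range_eq_add_Ico _ (by omega), Nat.cast_zero, zero_sub, abs_neg, abs_of_nonneg hx0,
      ← Icc_sub_one_right_eq_Ico_of_not_isMin (by simpa using (by omega : r ≠ 0))] at hrange
    linarith
  have hscale : ∀ i : ℕ, (m : ℝ) * i - r * j = m * (i - x) := fun i => by
    rw [hx]; field_simp
  simp_rw [hscale, abs_mul, abs_of_pos hm]
  rw [sum_sub_distrib, sum_const, ← mul_sum, ← mul_sum, hIcc, Nat.card_Icc, Nat.add_sub_cancel,
    nsmul_eq_mul, Nat.cast_pred (by omega), Int.fract, hx]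
  field_simp
  ring

theorem arithmetic_identity (r m j : ℕ) (hr : 2 ≤ r) (hrm : r ≤ m) (hj1 : 1 ≤ j)
    (hjm : j ≤ m - 1) :
    (1 / ((r : ℝ) * m)) *
        ∑ i ∈ Finset.Icc 1 (r - 1), ((r : ℝ) * m - 2 * |(m : ℝ) * i - r * j|) =
      (2 / (r : ℝ)) *
        (((r : ℝ) * j / m - ⌊(r : ℝ) * j / m⌋ - 1 / 2) ^ 2 +
          (r : ℝ) ^ 2 * j * (m - j) / m ^ 2 - 1 / 4) :=
  arithmetic_identity_general r m j hr hj1 hjm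
end

section
/- Let r, m, j be integers with 2 ≤ r ≤ m, 1 ≤ j ≤ m−1, and suppose rj/m is not an integer. Then for each i with 1 ≤ i ≤ r−1, Σ_{k=1}^{rm} sign( sin(kπ(i/r − j/m)) · sin((k+1)π(i/r − j/m)) ) = rm − 2|mi − rj|. -/
/-!
On each open interval `(n, n + 1)` the function `sin (π t)` has the sign `(-1) ^ n`, and it vanishes
at the integers. Hence for `x < y < x + 1` the sign of `sin (π x) * sin (π y)` is
`1 - (φ y - φ x)` with `φ t = ⌊t⌋ + ⌈t⌉`, and the sum over `k` telescopes to `N + 1 - φ ((N + 1) θ)`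
for `0 < θ < 1`. The summand is even in `θ`, and for `θ = |i / r - j / m| = D / N` with
`D = |m i - r j|` and `N = r m` the point `(N + 1) θ = D + θ` lies strictly between `D` and `D + 1`,
so `φ ((N + 1) θ) = 2 D + 1`.
-/

open Real Set Finset

theorem Real.sign_mul (a b : ℝ) : Real.sign (a * b) = Real.sign a * Real.sign b := by
  rcases lt_trichotomy a 0 with ha | rfl | ha <;> rcases lt_trichotomy b 0 with hb | rfl | hb <;>
    simp [*, Real.sign_of_pos, Real.sign_of_neg, mul_pos_of_neg_of_neg,
      mul_neg_of_neg_of_pos, mul_neg_of_pos_of_neg]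

theorem sign_sin_pi_mul_of_notMem {x : ℝ} (hx : x ∉ range ((↑) : ℤ → ℝ)) :
    Real.sign (sin (π * x)) = (-1) ^ ⌊x⌋ := by
  have hfract : 0 < Int.fract x := (Int.fract_nonneg x).lt_of_ne' (Int.fract_ne_zero_iff.2 hx)
  have hpos : 0 < sin (π * Int.fract x) :=
    sin_pos_of_pos_of_lt_pi (by positivity) (by nlinarith [Int.fract_lt_one x, pi_pos])
  have hshift : sin (π * x) = (-1) ^ ⌊x⌋ * sin (π * Int.fract x) := by
    rw [← sin_add_int_mul_pi, Int.fract]; ring_nf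
  rw [hshift, Real.sign_mul, Real.sign_of_pos hpos, mul_one]
  rcases Int.even_or_odd ⌊x⌋ with h | h
  · rw [h.neg_one_zpow, Real.sign_one]
  · rw [h.neg_one_zpow, Real.sign_neg, Real.sign_one]

theorem sign_sin_pi_mul_mul_sin_pi_mul {x y : ℝ} (hxy : x < y) (hyx : y < x + 1) :
    Real.sign (sin (π * x) * sin (π * y)) = 1 - ((⌊y⌋ + ⌈y⌉ - (⌊x⌋ + ⌈x⌉) : ℤ) : ℝ) := by
  by_cases hx : x ∈ range ((↑) : ℤ → ℝ)
  · obtain ⟨n, rfl⟩ := hx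
    have hfy : ⌊y⌋ = n := Int.floor_eq_iff.2 ⟨hxy.le, hyx⟩
    have hcy : ⌈y⌉ = n + 1 := Int.ceil_eq_iff.2 ⟨by push_cast; linarith, by push_cast; linarith⟩
    rw [mul_comm π, sin_int_mul_pi, zero_mul, Real.sign_zero, hfy, hcy, Int.floor_intCast,
      Int.ceil_intCast]
    push_cast; ring
  by_cases hy : y ∈ range ((↑) : ℤ → ℝ)
  · obtain ⟨n, rfl⟩ := hy
    have hfx : ⌊x⌋ = n - 1 := Int.floor_eq_iff.2 ⟨by push_cast; linarith, by push_cast; linarith⟩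
    have hcx : ⌈x⌉ = n := Int.ceil_eq_iff.2 ⟨by linarith, hxy.le⟩
    rw [mul_comm π (n : ℝ), sin_int_mul_pi, mul_zero, Real.sign_zero, hfx, hcx,
      Int.floor_intCast, Int.ceil_intCast]
    push_cast; ring
  have hfloor_le : ⌊x⌋ ≤ ⌊y⌋ := Int.floor_mono hxy.le
  have hfloor_le' : ⌊y⌋ ≤ ⌊x⌋ + 1 := by
    simpa only [Int.floor_add_one] using Int.floor_mono hyx.le
  rw [Real.sign_mul, sign_sin_pi_mul_of_notMem hx, sign_sin_pi_mul_of_notMem hy,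
    (Int.ceil_eq_floor_add_one_iff_notMem x).2 hx, (Int.ceil_eq_floor_add_one_iff_notMem y).2 hy,
    ← zpow_add₀ (by norm_num)]
  obtain h | h : ⌊y⌋ = ⌊x⌋ ∨ ⌊y⌋ = ⌊x⌋ + 1 := by omega
  · rw [h, Even.neg_one_zpow ⟨_, rfl⟩]; push_cast; ring
  · rw [h, Odd.neg_one_zpow ⟨⌊x⌋, by ring⟩]; push_cast; ring

theorem floor_add_ceil_of_mem_Ioo {t : ℝ} (n : ℤ) (hn : n < t) (ht : t < n + 1) :
    ⌊t⌋ + ⌈t⌉ = 2 * n + 1 := by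
  have hceil : ⌈t⌉ = n + 1 :=
    Int.ceil_eq_iff.2 ⟨by push_cast; linarith, by push_cast; linarith⟩
  rw [Int.floor_eq_iff.2 ⟨hn.le, ht⟩, hceil]
  ring

theorem sum_sign_sin_mul_sin (N : ℕ) {θ : ℝ} (h0 : 0 < θ) (h1 : θ < 1) :
    ∑ k ∈ Icc 1 N, Real.sign (sin (k * π * θ) * sin ((k + 1) * π * θ)) =
      N + 1 - ((⌊(N + 1) * θ⌋ + ⌈(N + 1) * θ⌉ : ℤ) : ℝ) := by
  set g : ℕ → ℝ := fun k ↦ ((⌊k * θ⌋ + ⌈k * θ⌉ : ℤ) : ℝ)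
  have hterm (k : ℕ) :
      Real.sign (sin (k * π * θ) * sin ((k + 1) * π * θ)) = 1 - (g (k + 1) - g k) := by
    rw [show (k : ℝ) * π * θ = π * (k * θ) by ring,
      show ((k : ℝ) + 1) * π * θ = π * ((k + 1) * θ) by ring,
      sign_sin_pi_mul_mul_sin_pi_mul (by nlinarith) (by nlinarith)]
    simp [g]
  have hθ : ⌊θ⌋ + ⌈θ⌉ = 1 := by simpa using floor_add_ceil_of_mem_Ioo 0 (by simpa) (by simpa)
  have hg1 : g 1 = 1 := by simp only [g, Nat.cast_one, one_mul, hθ, Int.cast_one]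
  rcases N with _ | N
  · simp [hθ]
  rw [sum_congr rfl fun k _ ↦ hterm k, sum_sub_distrib, sum_Icc_sub (by omega), hg1]
  simp [g]
  ring

theorem sin_mul_mul_sin_mul_abs (a b θ : ℝ) :
    sin (a * θ) * sin (b * θ) = sin (a * |θ|) * sin (b * |θ|) := by
  rcases abs_choice θ with h | h <;> simp [h]

theorem sum_sign_sin_mul_sin_of_mul_abs_eq (N : ℕ) {θ : ℝ} (D : ℤ) (h0 : θ ≠ 0)
    (h1 : |θ| < 1) (hD : N * |θ| = D) :
    ∑ k ∈ Icc 1 N, Real.sign (sin (k * π * θ) * sin ((k + 1) * π * θ)) = N - 2 * D := by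
  simp_rw [sin_mul_mul_sin_mul_abs _ _ θ]
  have hshift : ((N : ℝ) + 1) * |θ| = D + |θ| := by rw [← hD]; ring
  rw [sum_sign_sin_mul_sin N (abs_pos.2 h0) h1, hshift,
    floor_add_ceil_of_mem_Ioo D (by simpa using h0) (by linarith)]
  push_cast; ring

theorem sign_sum_identity_general (r m j : ℕ) (hr : 2 ≤ r) (hj1 : 1 ≤ j)
    (hjm : j ≤ m - 1) (hnotint : ¬ (m : ℤ) ∣ (r * j : ℤ))
    (i : ℕ) (hi2 : i ≤ r - 1) :
    ∑ k ∈ Finset.Icc 1 (r * m),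
        Real.sign (Real.sin (k * π * ((i : ℝ) / r - (j : ℝ) / m)) *
          Real.sin ((k + 1) * π * ((i : ℝ) / r - (j : ℝ) / m))) =
      (r : ℝ) * m - 2 * |(m : ℝ) * i - r * j| := by
  have hr0 : (r : ℝ) ≠ 0 := by norm_cast; omega
  have hm0 : (m : ℝ) ≠ 0 := by norm_cast; omega
  have hθ : (i : ℝ) / r - j / m = ((m * i - r * j : ℤ) : ℝ) / (r * m) := by
    push_cast; field_simp
  have hne : (m * i - r * j : ℤ) ≠ 0 := fun h ↦ hnotint ⟨i, by linarith⟩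
  have hlt : |(m * i - r * j : ℤ)| < r * m := by
    rw [abs_lt]
    constructor <;> nlinarith [show (i : ℤ) ≤ r - 1 by omega, show (j : ℤ) ≤ m - 1 by omega]
  rw [sum_sign_sin_mul_sin_of_mul_abs_eq (r * m) |(m * i - r * j : ℤ)|]
  · push_cast; ring
  · rw [hθ]; exact div_ne_zero (by exact_mod_cast hne) (mul_ne_zero hr0 hm0)
  · rw [hθ, abs_div, div_lt_one (by positivity)]; exact_mod_cast hlt
  · rw [hθ, abs_div, abs_of_pos (by positivity : (0 : ℝ) < r * m)]; push_cast; field_simp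

theorem sign_sum_identity (r m j : ℕ) (hr : 2 ≤ r) (hrm : r ≤ m) (hj1 : 1 ≤ j)
    (hjm : j ≤ m - 1) (hnotint : ¬ (m : ℤ) ∣ (r * j : ℤ))
    (i : ℕ) (hi1 : 1 ≤ i) (hi2 : i ≤ r - 1) :
    ∑ k ∈ Finset.Icc 1 (r * m),
        Real.sign (Real.sin (k * π * ((i : ℝ) / r - (j : ℝ) / m)) *
          Real.sin ((k + 1) * π * ((i : ℝ) / r - (j : ℝ) / m))) =
      (r : ℝ) * m - 2 * |(m : ℝ) * i - r * j| :=
  sign_sum_identity_general r m j hr hj1 hjm hnotint i hi2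
end

section
/- Let B ∈ SL(2,ℤ) be the matrix [[−3,2],[−2,1]]. Then −J·Σ_{k=1}^{n}(B^k − B^{−k}) = ((−1)ⁿ(2n+1) − 1)·[[−1,1],[1,−1]], where J = [[0,1],[−1,0]]. -/
/-!
Writing `N = !![1, -1; 1, -1]`, which squares to zero, the matrix is `B = -(1 + 2 • N)` with
inverse `-(1 - 2 • N)`. The binomial expansion of a power of `1 + a • N` stops after the linear
term, so `B ^ k - B⁻¹ ^ k = (-1) ^ k • ((1 + 2k • N) - (1 - 2k • N)) = ((-1) ^ k * 4k) • N`.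
The alternating sum of `4k` is `(-1) ^ n (2n + 1) - 1`, and `-J * N = !![-1, 1; 1, -1]`.
-/

open Matrix

section SquareZero

variable {R : Type*} [Ring R] {N : R}

theorem one_add_zsmul_pow_of_mul_self_eq_zero (hN : N * N = 0) (a : ℤ) (k : ℕ) :
    (1 + a • N) ^ k = 1 + (k * a) • N := by
  induction k with
  | zero => simp
  | succ k ih =>
    rw [pow_succ, ih]
    simp only [add_mul, mul_add, one_mul, mul_one, smul_mul_smul_comm, hN, smul_zero, add_zero]
    push_cast
    rw [add_assoc, ← add_smul, add_mul, one_mul]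

theorem one_add_zsmul_mul_one_sub_zsmul (hN : N * N = 0) (a : ℤ) :
    (1 + a • N) * (1 - a • N) = 1 := by
  simp only [add_mul, mul_sub, one_mul, mul_one, smul_mul_smul_comm, hN, smul_zero]
  abel

theorem neg_one_add_zsmul_pow_sub_pow (hN : N * N = 0) (a : ℤ) (k : ℕ) :
    (-(1 + a • N)) ^ k - (-(1 - a • N)) ^ k = ((-1) ^ k * (2 * k * a)) • N := by
  have hminus : 1 - a • N = 1 + (-a) • N := by rw [neg_smul, sub_eq_add_neg]
  rw [hminus, neg_pow, neg_pow (1 + _), one_add_zsmul_pow_of_mul_self_eq_zero hN,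
    one_add_zsmul_pow_of_mul_self_eq_zero hN, ← mul_sub, add_sub_add_left_eq_sub, ← sub_smul,
    mul_smul, zsmul_eq_mul _ ((-1) ^ k), Int.cast_pow, Int.cast_neg, Int.cast_one]
  congr 2
  ring

end SquareZero

theorem sum_Icc_neg_one_pow_mul_four_mul (n : ℕ) :
    ∑ k ∈ Finset.Icc 1 n, (-1 : ℤ) ^ k * (4 * k) = (-1) ^ n * (2 * n + 1) - 1 := by
  induction n with
  | zero => simp
  | succ n ih =>
    rw [Finset.sum_Icc_succ_top (by omega), ih]
    push_cast
    ring

theorem twist_product_signature_sum (n : ℕ) :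
    let B : Matrix (Fin 2) (Fin 2) ℤ := !![-3, 2; -2, 1]
    let J : Matrix (Fin 2) (Fin 2) ℤ := !![0, 1; -1, 0]
    (-J) * (∑ k ∈ Finset.Icc 1 n, (B ^ k - B⁻¹ ^ k)) =
      ((-1 : ℤ) ^ n * (2 * n + 1) - 1) • !![-1, 1; 1, -1] := by
  intro B J
  set N : Matrix (Fin 2) (Fin 2) ℤ := !![1, -1; 1, -1]
  have hN : N * N = 0 := by decide
  have hB : B = -(1 + (2 : ℤ) • N) := by decide
  have hB_inv : B⁻¹ = -(1 - (2 : ℤ) • N) :=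
    inv_eq_right_inv (by rw [hB, neg_mul_neg, one_add_zsmul_mul_one_sub_zsmul hN])
  have hsum :
      ∑ k ∈ Finset.Icc 1 n, (B ^ k - B⁻¹ ^ k) = ((-1 : ℤ) ^ n * (2 * n + 1) - 1) • N := by
    simp_rw [hB_inv, hB, neg_one_add_zsmul_pow_sub_pow hN, ← Finset.sum_smul,
      ← sum_Icc_neg_one_pow_mul_four_mul]
    congr 1
    exact Finset.sum_congr rfl fun k _ => by ring
  rw [hsum, Matrix.mul_smul]
  congr 1
  decide
end

section
/- Let G be a group and suppose elements t₁, …, t_{2g+1} ∈ G satisfy the braid relations (t_i t_j = t_j t_i if |i−j| ≥ 2, t_i t_{i+1} t_i = t_{i+1} t_i t_{i+1}), together with an element t_{2g+2} with (t_{2g}⋯t_2)^{2g} = t_{2g+2}², and suppose the hyperelliptic relation t_{2g+1}² t_{2g} ⋯ t_2 t_1² = (t_{2g}⋯t_2)^{−1} holds. Then for any homogeneous quasimorphism φ on G such that all t_i (1 ≤ i ≤ 2g+2) are mutually conjugate in G, one has D(φ) ≥ (2g + 3 + 1/g)·|φ(t₁)|. -/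
/-!
Write `c = t_{2g} ⋯ t_2` and `bᵢ = tᵢ` for `2 ≤ i ≤ 2g`, `b₁ = t₁²`, `b_{2g+1} = t_{2g+1}²`.
Consecutive `bᵢ` are the only ones that may fail to commute, so, as for Coxeter elements of a
path, the descending product `b_{2g+1} ⋯ b₁ = t_{2g+1}² c t₁² = c⁻¹` is conjugate to `A B` with
`A = b₁ b₃ ⋯ b_{2g+1}` and `B = b₂ b₄ ⋯ b_{2g}`. Both `A` and `B` are products of pairwise
commuting conjugates of `t₁`, so a homogeneous quasimorphism takes the values `(g + 3) φ(t₁)` and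
`g φ(t₁)` on them, while `c^{2g} = t_{2g+2}²` forces `φ(A B) = -φ(c) = -φ(t₁) / g`. The defect
inequality for the pair `(A, B)` then gives the bound.
-/

/-- The descending product `t (2g) * t (2g-1) * ⋯ * t 2`. -/
def descChain {G : Type*} [Group G] (t : ℕ → G) (g : ℕ) : G :=
  ((List.range (2 * g - 1)).map (fun k => t (2 * g - k))).prod

lemma eq_zero_of_forall_abs_nat_mul_le {e K : ℝ} (h : ∀ n : ℕ, |(n : ℝ) * e| ≤ K) : e = 0 := by
  by_contra he
  obtain ⟨n, hn⟩ := exists_nat_gt (K / |e|)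
  rw [div_lt_iff₀ (abs_pos.mpr he)] at hn
  have := h n
  rw [abs_mul, Nat.abs_cast] at this
  linarith

lemma isConj_mul_comm {G : Type*} [Group G] (x y : G) : IsConj (x * y) (y * x) :=
  isConj_iff.mpr ⟨x⁻¹, by group⟩

namespace HomogeneousQuasimorphism

variable {G : Type*} [Group G] {φ : G → ℝ} {D : ℝ}

lemma map_pow (hhom : ∀ (x : G) (n : ℤ), φ (x ^ n) = n * φ x) (x : G) (n : ℕ) :
    φ (x ^ n) = n * φ x := by
  simpa using hhom x n

lemma map_one (hhom : ∀ (x : G) (n : ℤ), φ (x ^ n) = n * φ x) : φ 1 = 0 := by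
  simpa using hhom 1 0

lemma map_inv (hhom : ∀ (x : G) (n : ℤ), φ (x ^ n) = n * φ x) (x : G) : φ x⁻¹ = -φ x := by
  simpa using hhom x (-1)

lemma map_mul_of_commute (hq : ∀ x y : G, |φ (x * y) - φ x - φ y| ≤ D)
    (hhom : ∀ (x : G) (n : ℤ), φ (x ^ n) = n * φ x) {x y : G} (h : Commute x y) :
    φ (x * y) = φ x + φ y := by
  have key (n : ℕ) : |(n : ℝ) * (φ (x * y) - φ x - φ y)| ≤ D := by
    rw [mul_sub, mul_sub, ← map_pow hhom, ← map_pow hhom, ← map_pow hhom, h.mul_pow]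
    exact hq (x ^ n) (y ^ n)
  linarith [eq_zero_of_forall_abs_nat_mul_le key]

lemma abs_map_conj_sub_le (hq : ∀ x y : G, |φ (x * y) - φ x - φ y| ≤ D)
    (hhom : ∀ (x : G) (n : ℤ), φ (x ^ n) = n * φ x) (w y : G) :
    |φ (w * y * w⁻¹) - φ y| ≤ 2 * D := by
  have h₁ := hq w (y * w⁻¹)
  have h₂ := hq y w⁻¹
  rw [← mul_assoc] at h₁
  rw [map_inv hhom] at h₂
  rw [abs_le] at h₁ h₂ ⊢
  constructor <;> linarith [h₁.1, h₁.2, h₂.1, h₂.2]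

lemma map_conj (hq : ∀ x y : G, |φ (x * y) - φ x - φ y| ≤ D)
    (hhom : ∀ (x : G) (n : ℤ), φ (x ^ n) = n * φ x) (w x : G) :
    φ (w * x * w⁻¹) = φ x := by
  have key (n : ℕ) : |(n : ℝ) * (φ (w * x * w⁻¹) - φ x)| ≤ 2 * D := by
    rw [mul_sub, ← map_pow hhom, ← map_pow hhom, conj_pow]
    exact abs_map_conj_sub_le hq hhom w (x ^ n)
  linarith [eq_zero_of_forall_abs_nat_mul_le key]

lemma map_eq_of_isConj (hq : ∀ x y : G, |φ (x * y) - φ x - φ y| ≤ D)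
    (hhom : ∀ (x : G) (n : ℤ), φ (x ^ n) = n * φ x) {x y : G} (h : IsConj x y) :
    φ x = φ y := by
  obtain ⟨w, rfl⟩ := isConj_iff.mp h
  exact (map_conj hq hhom w x).symm

end HomogeneousQuasimorphism

section PathProducts

variable {G : Type*} [Group G]

def descendingProd (b : ℕ → G) : ℕ → G
  | 0 => 1
  | n + 1 => b (n + 1) * descendingProd b n

def parityProd (b : ℕ → G) : ℕ → G
  | 0 => 1
  | 1 => b 1
  | n + 2 => parityProd b n * b (n + 2)

lemma descendingProd_succ_eq_prod_range_mul (b : ℕ → G) (m : ℕ) :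
    descendingProd b (m + 1) = ((List.range m).map fun k => b (m + 1 - k)).prod * b 1 := by
  induction m with
  | zero => simp [descendingProd]
  | succ m ih =>
    rw [descendingProd, ih]
    simp [List.range_succ_eq_map, Function.comp_def, mul_assoc]

lemma commute_parityProd {b : ℕ → G} {q : G} :
    ∀ {n : ℕ}, (∀ j, 1 ≤ j → j ≤ n → Commute (b j) q) → Commute (parityProd b n) q
  | 0, _ => Commute.one_left q
  | 1, h => h 1 le_rfl le_rfl
  | n + 2, h =>
    (commute_parityProd fun j hj hjn => h j hj (by omega)).mul_left (h (n + 2) (by omega) le_rfl)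

/-- The pendant `q` is what makes the induction work: rotating the top factor `b (n + 2)` to the
end merges it into the new pendant `q * b (n + 2)`, which still commutes with `b 1, …, b n`, and
each step swaps the roles of the two parity classes. -/
theorem isConj_descendingProd_mul (b : ℕ → G) (n : ℕ)
    (hb : ∀ i j, 1 ≤ i → i + 2 ≤ j → j ≤ n + 1 → Commute (b i) (b j)) (q : G)
    (hq : ∀ j, 1 ≤ j → j ≤ n → Commute (b j) q) :
    IsConj (descendingProd b (n + 1) * q) (parityProd b (n + 1) * parityProd b n * q) := by
  induction n generalizing q with
  | zero => exact isConj_iff.mpr ⟨1, by simp [descendingProd, parityProd]⟩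
  | succ n ih =>
    set X := parityProd b (n + 1)
    set Y := parityProd b n
    have hqY : Commute Y q := commute_parityProd fun j hj hjn => hq j hj (by omega)
    have hIH : IsConj (descendingProd b (n + 1) * (q * b (n + 2))) (X * Y * (q * b (n + 2))) :=
      ih (fun i j hi hij hj => hb i j hi hij (by omega)) _ fun j hj hjn =>
        (hq j hj (by omega)).mul_right (hb j (n + 2) hj (by omega) le_rfl)
    have hstart : descendingProd b (n + 2) * q = b (n + 2) * (descendingProd b (n + 1) * q) := by
      simp only [descendingProd, mul_assoc]
    have hend : Y * (q * b (n + 2)) * X = q * (Y * b (n + 2) * X) := by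
      rw [← mul_assoc, hqY.eq]; group
    rw [hstart]
    refine (isConj_mul_comm _ _).trans ?_
    rw [mul_assoc]
    refine hIH.trans ?_
    rw [mul_assoc X]
    refine (isConj_mul_comm _ _).trans ?_
    rw [hend]
    exact isConj_mul_comm _ _

end PathProducts

namespace HomogeneousQuasimorphism

variable {G : Type*} [Group G] {φ : G → ℝ} {D : ℝ}

lemma map_parityProd_add_two (hq : ∀ x y : G, |φ (x * y) - φ x - φ y| ≤ D)
    (hhom : ∀ (x : G) (n : ℤ), φ (x ^ n) = n * φ x) {b : ℕ → G} {n : ℕ}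
    (hb : ∀ j, 1 ≤ j → j ≤ n → Commute (b j) (b (n + 2))) :
    φ (parityProd b (n + 2)) = φ (parityProd b n) + φ (b (n + 2)) :=
  map_mul_of_commute hq hhom (commute_parityProd hb)

lemma natCast_mul_map_eq_of_pow_eq_pow (hhom : ∀ (x : G) (n : ℤ), φ (x ^ n) = n * φ x) {x y : G}
    {m n : ℕ} (h : x ^ m = y ^ n) : m * φ x = n * φ y := by
  rw [← map_pow hhom, ← map_pow hhom, h]

end HomogeneousQuasimorphism

section Hyperelliptic

open HomogeneousQuasimorphism

variable {G : Type*} [Group G] {φ : G → ℝ} {D : ℝ} {t : ℕ → G} {g : ℕ} {a : ℝ}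

def hyperellipticBlock (t : ℕ → G) (g i : ℕ) : G :=
  t i ^ (if i = 1 ∨ i = 2 * g + 1 then 2 else 1)

lemma hyperellipticBlock_of_ne (t : ℕ → G) {g i : ℕ} (h₁ : i ≠ 1) (h₂ : i ≠ 2 * g + 1) :
    hyperellipticBlock t g i = t i := by
  simp [hyperellipticBlock, h₁, h₂]

lemma hyperellipticBlock_one (t : ℕ → G) (g : ℕ) : hyperellipticBlock t g 1 = t 1 ^ 2 := by
  simp [hyperellipticBlock]

lemma hyperellipticBlock_two_mul_add_one (t : ℕ → G) (g : ℕ) :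
    hyperellipticBlock t g (2 * g + 1) = t (2 * g + 1) ^ 2 := by
  simp [hyperellipticBlock]

lemma descendingProd_hyperellipticBlock (t : ℕ → G) {g : ℕ} (hg : 1 ≤ g) :
    descendingProd (hyperellipticBlock t g) (2 * g + 1) =
      t (2 * g + 1) ^ 2 * descChain t g * t 1 ^ 2 := by
  have hprod := descendingProd_succ_eq_prod_range_mul (hyperellipticBlock t g) (2 * g - 1)
  rw [show 2 * g - 1 + 1 = 2 * g by omega] at hprod
  have hmiddle : ((List.range (2 * g - 1)).map fun k => hyperellipticBlock t g (2 * g - k)) =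
      (List.range (2 * g - 1)).map fun k => t (2 * g - k) :=
    List.map_congr_left fun k hk => by
      rw [List.mem_range] at hk
      exact hyperellipticBlock_of_ne t (by omega) (by omega)
  rw [descendingProd, hprod, hmiddle, ← descChain, hyperellipticBlock_one,
    hyperellipticBlock_two_mul_add_one, mul_assoc]

lemma commute_hyperellipticBlock
    (hcomm : ∀ i j : ℕ, 1 ≤ i → i ≤ 2 * g + 1 → 1 ≤ j → j ≤ 2 * g + 1 →
      (i + 2 ≤ j ∨ j + 2 ≤ i) → t i * t j = t j * t i)
    (i j : ℕ) (hi : 1 ≤ i) (hij : i + 2 ≤ j) (hj : j ≤ 2 * g + 1) :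
    Commute (hyperellipticBlock t g i) (hyperellipticBlock t g j) :=
  Commute.pow_pow (hcomm i j hi (by omega) (by omega) hj (Or.inl hij)) _ _

lemma map_parityProd_hyperellipticBlock_even
    (hq : ∀ x y : G, |φ (x * y) - φ x - φ y| ≤ D)
    (hhom : ∀ (x : G) (n : ℤ), φ (x ^ n) = n * φ x)
    (hb : ∀ i j, 1 ≤ i → i + 2 ≤ j → j ≤ 2 * g + 1 →
      Commute (hyperellipticBlock t g i) (hyperellipticBlock t g j))
    (hφt : ∀ i, 1 ≤ i → i ≤ 2 * g + 1 → φ (t i) = a) :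
    ∀ k ≤ g, φ (parityProd (hyperellipticBlock t g) (2 * k)) = k * a
  | 0, _ => by simpa [parityProd] using map_one hhom
  | k + 1, hk => by
    rw [show 2 * (k + 1) = 2 * k + 2 by ring,
      map_parityProd_add_two hq hhom fun j hj hjk => hb j _ hj (by omega) (by omega),
      map_parityProd_hyperellipticBlock_even hq hhom hb hφt k (by omega),
      hyperellipticBlock_of_ne t (by omega) (by omega), hφt _ (by omega) (by omega)]
    push_cast
    ring

lemma map_parityProd_hyperellipticBlock_odd
    (hq : ∀ x y : G, |φ (x * y) - φ x - φ y| ≤ D)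
    (hhom : ∀ (x : G) (n : ℤ), φ (x ^ n) = n * φ x)
    (hb : ∀ i j, 1 ≤ i → i + 2 ≤ j → j ≤ 2 * g + 1 →
      Commute (hyperellipticBlock t g i) (hyperellipticBlock t g j))
    (hφt : ∀ i, 1 ≤ i → i ≤ 2 * g + 1 → φ (t i) = a) :
    ∀ k < g, φ (parityProd (hyperellipticBlock t g) (2 * k + 1)) = (k + 2) * a
  | 0, _ => by
    rw [parityProd, hyperellipticBlock_one, map_pow hhom, hφt 1 le_rfl (by omega)]
    push_cast
    ring
  | k + 1, hk => by
    rw [show 2 * (k + 1) + 1 = 2 * k + 1 + 2 by ring,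
      map_parityProd_add_two hq hhom fun j hj hjk => hb j _ hj (by omega) (by omega),
      map_parityProd_hyperellipticBlock_odd hq hhom hb hφt k (by omega),
      hyperellipticBlock_of_ne t (by omega) (by omega), hφt _ (by omega) (by omega)]
    push_cast
    ring

lemma map_parityProd_hyperellipticBlock_top
    (hq : ∀ x y : G, |φ (x * y) - φ x - φ y| ≤ D)
    (hhom : ∀ (x : G) (n : ℤ), φ (x ^ n) = n * φ x)
    (hb : ∀ i j, 1 ≤ i → i + 2 ≤ j → j ≤ 2 * g + 1 →
      Commute (hyperellipticBlock t g i) (hyperellipticBlock t g j))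
    (hφt : ∀ i, 1 ≤ i → i ≤ 2 * g + 1 → φ (t i) = a) (hg : 1 ≤ g) :
    φ (parityProd (hyperellipticBlock t g) (2 * g + 1)) = (g + 3) * a := by
  have hsplit : 2 * g + 1 = 2 * (g - 1) + 1 + 2 := by omega
  rw [hsplit, map_parityProd_add_two hq hhom fun j hj hjk => hb j _ hj (by omega) (by omega),
    map_parityProd_hyperellipticBlock_odd hq hhom hb hφt (g - 1) (by omega), ← hsplit,
    hyperellipticBlock_two_mul_add_one, map_pow hhom, hφt _ (by omega) le_rfl, Nat.cast_sub hg]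
  push_cast
  ring

lemma map_descChain (hhom : ∀ (x : G) (n : ℤ), φ (x ^ n) = n * φ x) (hg : 1 ≤ g)
    (hchain : descChain t g ^ (2 * g) = t (2 * g + 2) ^ 2) (ht : φ (t (2 * g + 2)) = a) :
    φ (descChain t g) = a / g := by
  have := natCast_mul_map_eq_of_pow_eq_pow hhom hchain
  rw [ht] at this
  push_cast at this
  have hg' : (g : ℝ) ≠ 0 := by positivity
  field_simp
  linarith

end Hyperelliptic

theorem defect_lower_bound_hyperelliptic_general {G : Type*} [Group G] (g : ℕ) (hg : 1 ≤ g)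
    (t : ℕ → G)
    (hcomm : ∀ i j : ℕ, 1 ≤ i → i ≤ 2 * g + 1 → 1 ≤ j → j ≤ 2 * g + 1 →
      (i + 2 ≤ j ∨ j + 2 ≤ i) → t i * t j = t j * t i)
    (hchain : (descChain t g) ^ (2 * g) = (t (2 * g + 2)) ^ 2)
    (hhyper : (t (2 * g + 1)) ^ 2 * descChain t g * (t 1) ^ 2 = (descChain t g)⁻¹)
    (hconjall : ∀ i j : ℕ, 1 ≤ i → i ≤ 2 * g + 2 → 1 ≤ j → j ≤ 2 * g + 2 →
      IsConj (t i) (t j))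
    (φ : G → ℝ) (D : ℝ)
    (hq : ∀ x y : G, |φ (x * y) - φ x - φ y| ≤ D)
    (hhom : ∀ (x : G) (n : ℤ), φ (x ^ n) = n * φ x) :
    (2 * (g : ℝ) + 3 + 1 / g) * |φ (t 1)| ≤ D := by
  set b := hyperellipticBlock t g
  set a := φ (t 1)
  have hφt (i : ℕ) (hi : 1 ≤ i) (hi' : i ≤ 2 * g + 2) : φ (t i) = a :=
    HomogeneousQuasimorphism.map_eq_of_isConj hq hhom (hconjall i 1 hi hi' le_rfl (by omega))
  have hb := commute_hyperellipticBlock hcomm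
  have hconj : IsConj (descChain t g)⁻¹ (parityProd b (2 * g + 1) * parityProd b (2 * g)) := by
    have := isConj_descendingProd_mul b (2 * g) hb 1 fun j _ _ => Commute.one_right _
    rwa [mul_one, mul_one, descendingProd_hyperellipticBlock t hg, hhyper] at this
  have hφc : φ (descChain t g) = a / g :=
    map_descChain hhom hg hchain (hφt _ (by omega) le_rfl)
  have hdefect := hq (parityProd b (2 * g + 1)) (parityProd b (2 * g))
  rw [← HomogeneousQuasimorphism.map_eq_of_isConj hq hhom hconj,
    HomogeneousQuasimorphism.map_inv hhom, hφc,
    map_parityProd_hyperellipticBlock_top hq hhom hb (fun i hi hi' => hφt i hi (by omega)) hg,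
    map_parityProd_hyperellipticBlock_even hq hhom hb (fun i hi hi' => hφt i hi (by omega)) g
      le_rfl] at hdefect
  have hcoeff : 0 < 2 * (g : ℝ) + 3 + 1 / g := by positivity
  calc (2 * (g : ℝ) + 3 + 1 / g) * |a| = |-(a / g) - (g + 3) * a - g * a| := by
        rw [← abs_of_pos hcoeff, ← abs_mul, ← abs_neg]
        congr 1
        ring
    _ ≤ D := hdefect

theorem defect_lower_bound_hyperelliptic {G : Type*} [Group G] (g : ℕ) (hg : 1 ≤ g)
    (t : ℕ → G)
    (hcomm : ∀ i j : ℕ, 1 ≤ i → i ≤ 2 * g + 1 → 1 ≤ j → j ≤ 2 * g + 1 →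
      (i + 2 ≤ j ∨ j + 2 ≤ i) → t i * t j = t j * t i)
    (hbraid : ∀ i : ℕ, 1 ≤ i → i + 1 ≤ 2 * g + 1 →
      t i * t (i + 1) * t i = t (i + 1) * t i * t (i + 1))
    (hchain : (descChain t g) ^ (2 * g) = (t (2 * g + 2)) ^ 2)
    (hhyper : (t (2 * g + 1)) ^ 2 * descChain t g * (t 1) ^ 2 = (descChain t g)⁻¹)
    (hconjall : ∀ i j : ℕ, 1 ≤ i → i ≤ 2 * g + 2 → 1 ≤ j → j ≤ 2 * g + 2 →
      IsConj (t i) (t j))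
    (φ : G → ℝ) (D : ℝ) (hD0 : 0 ≤ D)
    (hq : ∀ x y : G, |φ (x * y) - φ x - φ y| ≤ D)
    (hDleast : ∀ C : ℝ, 0 ≤ C → (∀ x y : G, |φ (x * y) - φ x - φ y| ≤ C) → D ≤ C)
    (hhom : ∀ (x : G) (n : ℤ), φ (x ^ n) = n * φ x) :
    (2 * (g : ℝ) + 3 + 1 / g) * |φ (t 1)| ≤ D :=
  defect_lower_bound_hyperelliptic_general g hg t hcomm hchain hhyper hconjall φ D hq hhom
end
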